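/- arXiv:2104.14752 — 3 statements merged into one kernel-verified Lean document; each statement's English description precedes it below -/
import Mathlib

section
/- If Y takes values in {1,...,K} with P(Y = k) = p_k, η(k) = P(Y < k) + P(Y = k)/2, then Var(η(Y)) = (1 - ∑_{k=1}^K p_k^3)/12. -/
open MeasureTheory ProbabilityTheory

private lemma tele (f : ℕ → ℝ) (K : ℕ) :
    ∑ k ∈ Finset.Icc 1 K, (f k - f (k-1)) = f K - f 0 := by
  induction K with
  | zero => simp
  | succ n ih => rw [Finset.sum_Icc_succ_top (by omega), ih]; simp

private lemma lotus {Ω : Type*} [MeasurableSpace Ω] (μ : Measure Ω)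
    [IsProbabilityMeasure μ] (K : ℕ) (Y : Ω → ℕ) (hY : Measurable Y)
    (hYmem : ∀ ω, Y ω ∈ Finset.Icc 1 K) (g : ℕ → ℝ) :
    ∫ ω, g (Y ω) ∂μ = ∑ k ∈ Finset.Icc 1 K, (μ {ω | Y ω = k}).toReal * g k := by
  have hmeas : ∀ k : ℕ, MeasurableSet {ω | Y ω = k} := fun k =>
    hY (measurableSet_singleton k)
  have heq : (fun ω => g (Y ω)) =
      fun ω => ∑ k ∈ Finset.Icc 1 K, Set.indicator {ω' | Y ω' = k} (fun _ => g k) ω := by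
    funext ω
    rw [Finset.sum_eq_single (Y ω)]
    · simp [Set.indicator_of_mem, Set.mem_setOf_eq]
    · intro b _ hb
      exact Set.indicator_of_notMem (by simpa using (Ne.symm hb)) _
    · intro h; exact absurd (hYmem ω) h
  rw [heq, integral_finset_sum]
  · refine Finset.sum_congr rfl fun k _ => ?_
    rw [integral_indicator_const _ (hmeas k)]
    simp [mul_comm, measureReal_def]
  · exact fun k _ => (integrable_const (g k)).indicator (hmeas k)

/-- If Y takes values in {1,...,K} with P(Y = k) = p_k, and
η(k) = P(Y < k) + P(Y = k)/2, then Var(η(Y)) = (1 - ∑_{k=1}^K p_k³)/12. -/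
theorem variance_midrank {Ω : Type*} [MeasurableSpace Ω] (μ : Measure Ω)
    [IsProbabilityMeasure μ] (K : ℕ) (Y : Ω → ℕ) (hY : Measurable Y)
    (hYmem : ∀ ω, Y ω ∈ Finset.Icc 1 K)
    (p η : ℕ → ℝ)
    (hp : ∀ k, p k = (μ {ω | Y ω = k}).toReal)
    (hη : ∀ k, η k = (∑ j ∈ Finset.Ico 1 k, p j) + p k / 2) :
    variance (fun ω => η (Y ω)) μ = (1 - ∑ k ∈ Finset.Icc 1 K, (p k) ^ 3) / 12 := by
  have hmeas : ∀ k : ℕ, MeasurableSet {ω | Y ω = k} := fun k =>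
    hY (measurableSet_singleton k)
  -- partition of unity
  have hsum1 : ∑ k ∈ Finset.Icc 1 K, p k = 1 := by
    have hdisj : (↑(Finset.Icc 1 K) : Set ℕ).PairwiseDisjoint
        (fun k => {ω | Y ω = k}) := by
      intro i _ j _ hij
      simp only [Function.onFun]
      rw [Set.disjoint_left]
      intro ω h1 h2
      exact hij (h1.symm.trans h2)
    have hunion : ⋃ k ∈ Finset.Icc 1 K, {ω | Y ω = k} = Set.univ := by
      ext ω; simp only [Set.mem_iUnion, Set.mem_setOf_eq, Set.mem_univ, iff_true]
      exact ⟨Y ω, hYmem ω, rfl⟩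
    have h1 : ∑ k ∈ Finset.Icc 1 K, μ {ω | Y ω = k} = 1 := by
      rw [← measure_biUnion_finset hdisj (fun k _ => hmeas k), hunion, measure_univ]
    have h2 : ∑ k ∈ Finset.Icc 1 K, p k
        = (∑ k ∈ Finset.Icc 1 K, μ {ω | Y ω = k}).toReal := by
      rw [ENNReal.toReal_sum (fun k _ => measure_ne_top μ _)]
      exact Finset.sum_congr rfl fun k _ => hp k
    rw [h2, h1, ENNReal.toReal_one]
  -- CDF
  set F : ℕ → ℝ := fun k => ∑ j ∈ Finset.Ico 1 (k+1), p j with hF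
  have hF0 : F 0 = 0 := by simp [hF]
  have hFK : F K = 1 := by
    rw [hF]; simp only; rw [Finset.Ico_add_one_right_eq_Icc]; exact hsum1
  have hstep : ∀ k, 1 ≤ k → F k = F (k-1) + p k := by
    intro k hk
    have h1 : k - 1 + 1 = k := by omega
    simp only [hF, h1]
    rw [Finset.sum_Ico_succ_top hk]
  have hηF : ∀ k, 1 ≤ k → η k = F (k-1) + p k / 2 := by
    intro k hk
    have h1 : k - 1 + 1 = k := by omega
    rw [hη k]; simp only [hF, h1]
  -- integrals
  have hint : ∀ g : ℕ → ℝ, ∫ ω, g (Y ω) ∂μ = ∑ k ∈ Finset.Icc 1 K, p k * g k := by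
    intro g
    rw [lotus μ K Y hY hYmem g]
    exact Finset.sum_congr rfl fun k _ => by rw [hp k]
  -- Memℒp
  have hmemp : MemLp (fun ω => η (Y ω)) 2 μ := by
    refine MemLp.of_bound ?_ (∑ k ∈ Finset.Icc 1 K, |η k|) ?_
    · exact ((measurable_from_top.comp hY).stronglyMeasurable (f := fun ω => η (Y ω))).aestronglyMeasurable
    · filter_upwards with ω
      have := hYmem ω
      calc ‖η (Y ω)‖ = |η (Y ω)| := rfl
        _ ≤ ∑ k ∈ Finset.Icc 1 K, |η k| :=
          Finset.single_le_sum (f := fun k => |η k|) (fun i _ => abs_nonneg _) this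
  rw [variance_eq_sub hmemp]
  have hX2 : ∫ ω, ((fun ω => η (Y ω)) ^ 2) ω ∂μ
      = ∑ k ∈ Finset.Icc 1 K, p k * (η k) ^ 2 := by
    have : ((fun ω => η (Y ω)) ^ 2) = fun ω => (fun k => (η k)^2) (Y ω) := by
      funext ω; simp [pow_two]
    rw [this, hint]
  have hX1 : ∫ ω, η (Y ω) ∂μ = ∑ k ∈ Finset.Icc 1 K, p k * η k := hint η
  -- mean = 1/2
  have hmean : ∑ k ∈ Finset.Icc 1 K, p k * η k = 1/2 := by
    have : ∀ k ∈ Finset.Icc 1 K, p k * η k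
        = (fun j => F j ^ 2 / 2) k - (fun j => F j ^ 2 / 2) (k-1) := by
      intro k hk
      have hk1 : 1 ≤ k := (Finset.mem_Icc.mp hk).1
      simp only [hηF k hk1, hstep k hk1]; ring
    rw [Finset.sum_congr rfl this, tele, hFK, hF0]; ring
  -- second moment
  have hsq : ∑ k ∈ Finset.Icc 1 K, p k * (η k) ^ 2
      = 1/3 - (∑ k ∈ Finset.Icc 1 K, p k ^ 3) / 12 := by
    have h1 : ∀ k ∈ Finset.Icc 1 K, p k * (η k) ^ 2
        = ((fun j => F j ^ 3 / 3) k - (fun j => F j ^ 3 / 3) (k-1)) - p k ^ 3 / 12 := by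
      intro k hk
      have hk1 : 1 ≤ k := (Finset.mem_Icc.mp hk).1
      simp only [hηF k hk1, hstep k hk1]; ring
    rw [Finset.sum_congr rfl h1, Finset.sum_sub_distrib, tele, hFK, hF0,
      ← Finset.sum_div]
    ring
  simp only [hX2, hX1, hmean, hsq]
  ring
end

section
/- Let S: {0,1,...,K} → (0,1] with S(0)=1 and S be nonincreasing, and let G: {1,...,K} → (0,1]. Fix k ≤ K. If S(j,w) is constant in w (i.e., S(j,w) = S(j) for all w), then the adjusted variance σ_a^2 = E[∑_{j=1}^k S(k)^2 {1/S(j) - 1/S(j-1)} / G(t_j, W)] is at least the unadjusted variance σ_u^2 = ∑_{j=1}^k S(k)^2 {1/S(j) - 1/S(j-1)} / G(t_j), with strict inequality if Var(G(t_j,W)) > 0 for some j with S(j-1) > S(j). -/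
open MeasureTheory ProbabilityTheory

lemma jensen_inv_aux {Ω : Type*} [MeasurableSpace Ω] (μ : Measure Ω) [IsProbabilityMeasure μ]
    (X : Ω → ℝ) (hX : Measurable X) (hpos : ∀ ω, 0 < X ω ∧ X ω ≤ 1)
    (hint : Integrable (fun ω => (X ω)⁻¹) μ) :
    (∫ ω, X ω ∂μ)⁻¹ + variance X μ / (∫ ω, X ω ∂μ) ^ 2 ≤ ∫ ω, (X ω)⁻¹ ∂μ := by
  have hXint : Integrable X μ := by
    refine (integrable_const (1:ℝ)).mono' hX.aestronglyMeasurable (ae_of_all _ fun ω => ?_)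
    rw [Real.norm_eq_abs, abs_of_pos (hpos ω).1]; exact (hpos ω).2
  set m := ∫ ω, X ω ∂μ with hm
  have hmpos : 0 < m := by
    rw [hm, integral_pos_iff_support_of_nonneg (fun ω => (hpos ω).1.le) hXint]
    have : Function.support X = Set.univ := by
      ext ω; simp [Function.mem_support, (hpos ω).1.ne']
    rw [this]; simp
  have hmem : MemLp X 2 μ := by
    refine memLp_of_bounded (ae_of_all _ fun ω => ⟨(hpos ω).1.le, (hpos ω).2⟩)
      hX.aestronglyMeasurable 2
  have hvar : variance X μ = ∫ ω, (X ω - m) ^ 2 ∂μ := variance_eq_integral hX.aemeasurable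
  have hsqint : Integrable (fun ω => (X ω - m) ^ 2) μ := (hmem.sub (memLp_const m)).integrable_sq
  have hpt : ∀ ω, 2 / m - X ω / m ^ 2 + (X ω - m) ^ 2 / m ^ 2 ≤ (X ω)⁻¹ := by
    intro ω
    obtain ⟨hx, hx1⟩ := hpos ω
    have key : (X ω)⁻¹ + X ω / m ^ 2 - 2 / m = (X ω - m) ^ 2 / (m ^ 2 * X ω) := by
      field_simp; ring
    have h1 : (X ω - m) ^ 2 / m ^ 2 ≤ (X ω - m) ^ 2 / (m ^ 2 * X ω) := by
      apply div_le_div_of_nonneg_left (sq_nonneg _) (by positivity)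
      calc m ^ 2 * X ω ≤ m ^ 2 * 1 := by nlinarith [sq_nonneg m]
        _ = m ^ 2 := mul_one _
    linarith [key ▸ h1]
  have hrhsint : Integrable (fun ω => 2 / m - X ω / m ^ 2 + (X ω - m) ^ 2 / m ^ 2) μ := by
    apply Integrable.add
    · exact (integrable_const _).sub (hXint.div_const _)
    · exact hsqint.div_const _
  have hmono := integral_mono hrhsint hint hpt
  have h1 : ∫ ω, (2 / m - X ω / m ^ 2 + (X ω - m) ^ 2 / m ^ 2) ∂μ
      = (∫ ω, (2 / m - X ω / m ^ 2) ∂μ) + ∫ ω, (X ω - m) ^ 2 / m ^ 2 ∂μ :=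
    integral_add ((integrable_const _).sub (hXint.div_const _)) (hsqint.div_const _)
  have h2 : ∫ ω, (2 / m - X ω / m ^ 2) ∂μ
      = (∫ _ω : Ω, (2 / m) ∂μ) - ∫ ω, X ω / m ^ 2 ∂μ :=
    integral_sub (integrable_const _) (hXint.div_const _)
  have h3 : ∫ ω, X ω / m ^ 2 ∂μ = m / m ^ 2 := by rw [integral_div]
  have h4 : ∫ ω, (X ω - m) ^ 2 / m ^ 2 ∂μ = (∫ ω, (X ω - m) ^ 2 ∂μ) / m ^ 2 := integral_div _ _
  have h5 : ∫ _ω : Ω, (2 / m) ∂μ = 2 / m := by simp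
  have hmm : 2 / m - m / m ^ 2 = m⁻¹ := by field_simp; ring
  rw [h1, h2, h3, h4, h5] at hmono
  rw [hvar]; linarith

/-- When the survival function does not depend on covariates but the censoring
distribution G(t_j, W) may, the adjusted asymptotic variance
E[∑_{j=1}^k S(k)² {1/S(j) - 1/S(j-1)} / G(t_j, W)] is at least the unadjusted
variance ∑_{j=1}^k S(k)² {1/S(j) - 1/S(j-1)} / G(t_j), where G(t_j) = E[G(t_j,W)],
with strict inequality if Var(G(t_j,W)) > 0 for some j with S(j-1) > S(j). -/
theorem unadjusted_le_adjusted_when_T_indep_W {Ω : Type*} [MeasurableSpace Ω]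
    (μ : Measure Ω) [IsProbabilityMeasure μ] (K k : ℕ) (hk1 : 1 ≤ k) (hkK : k ≤ K)
    (S : ℕ → ℝ) (hS0 : S 0 = 1) (hSpos : ∀ j ≤ K, 0 < S j ∧ S j ≤ 1)
    (hSanti : ∀ j, 1 ≤ j → j ≤ K → S j ≤ S (j - 1))
    (Gc : ℕ → Ω → ℝ) (hGmeas : ∀ j, Measurable (Gc j))
    (hGpos : ∀ j ω, 0 < Gc j ω ∧ Gc j ω ≤ 1)
    (hGint : ∀ j, Integrable (fun ω => (Gc j ω)⁻¹) μ)
    (G : ℕ → ℝ) (hG : ∀ j, G j = ∫ ω, Gc j ω ∂μ) :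
    (∑ j ∈ Finset.Icc 1 k, S k ^ 2 * (1 / S j - 1 / S (j - 1)) / G j
        ≤ ∫ ω, ∑ j ∈ Finset.Icc 1 k, S k ^ 2 * (1 / S j - 1 / S (j - 1)) / Gc j ω ∂μ) ∧
      ((∃ j ∈ Finset.Icc 1 k, S j < S (j - 1) ∧ 0 < variance (Gc j) μ) →
        ∑ j ∈ Finset.Icc 1 k, S k ^ 2 * (1 / S j - 1 / S (j - 1)) / G j
          < ∫ ω, ∑ j ∈ Finset.Icc 1 k, S k ^ 2 * (1 / S j - 1 / S (j - 1)) / Gc j ω ∂μ) := by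
  set c : ℕ → ℝ := fun j => S k ^ 2 * (1 / S j - 1 / S (j - 1)) with hc
  have hcnn : ∀ j ∈ Finset.Icc 1 k, 0 ≤ c j := by
    intro j hj
    rw [Finset.mem_Icc] at hj
    have hjK : j ≤ K := hj.2.trans hkK
    have hj1K : j - 1 ≤ K := (Nat.sub_le j 1).trans hjK
    have h1 := hSpos j hjK
    have h2 := hSpos (j - 1) hj1K
    have h3 := hSanti j hj.1 hjK
    have : 0 ≤ 1 / S j - 1 / S (j - 1) := by
      rw [sub_nonneg]
      exact one_div_le_one_div_of_le h1.1 h3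
    have hSk := hSpos k hkK
    positivity
  have htermint : ∀ j ∈ Finset.Icc 1 k, Integrable (fun ω => c j / Gc j ω) μ := by
    intro j _
    simpa [div_eq_mul_inv] using (hGint j).const_mul (c j)
  have hsplit : ∫ ω, ∑ j ∈ Finset.Icc 1 k, c j / Gc j ω ∂μ
      = ∑ j ∈ Finset.Icc 1 k, ∫ ω, c j / Gc j ω ∂μ :=
    integral_finset_sum _ htermint
  have hterm : ∀ j, ∫ ω, c j / Gc j ω ∂μ = c j * ∫ ω, (Gc j ω)⁻¹ ∂μ := by
    intro j
    simp only [div_eq_mul_inv]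
    exact integral_const_mul _ _
  have hjensen : ∀ j, (G j)⁻¹ + variance (Gc j) μ / (G j) ^ 2 ≤ ∫ ω, (Gc j ω)⁻¹ ∂μ := by
    intro j
    rw [hG j]
    exact jensen_inv_aux μ (Gc j) (hGmeas j) (hGpos j) (hGint j)
  have hGjpos : ∀ j, 0 < G j := by
    intro j
    rw [hG j]
    have hXint : Integrable (Gc j) μ := by
      refine (integrable_const (1:ℝ)).mono' (hGmeas j).aestronglyMeasurable
        (ae_of_all _ fun ω => ?_)
      rw [Real.norm_eq_abs, abs_of_pos (hGpos j ω).1]; exact (hGpos j ω).2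
    rw [integral_pos_iff_support_of_nonneg (fun ω => (hGpos j ω).1.le) hXint]
    have : Function.support (Gc j) = Set.univ := by
      ext ω; simp [Function.mem_support, (hGpos j ω).1.ne']
    rw [this]; simp
  have hle : ∀ j ∈ Finset.Icc 1 k, c j / G j ≤ ∫ ω, c j / Gc j ω ∂μ := by
    intro j hj
    rw [hterm j, div_eq_mul_inv]
    have h := hjensen j
    have hv := variance_nonneg (Gc j) μ
    have : (G j)⁻¹ ≤ ∫ ω, (Gc j ω)⁻¹ ∂μ := by
      have := div_nonneg hv (sq_nonneg (G j)); linarith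
    exact mul_le_mul_of_nonneg_left this (hcnn j hj)
  constructor
  · rw [hsplit]
    exact Finset.sum_le_sum hle
  · rintro ⟨j, hj, hSj, hvar⟩
    rw [hsplit]
    apply Finset.sum_lt_sum hle
    refine ⟨j, hj, ?_⟩
    rw [hterm j, div_eq_mul_inv]
    have hcpos : 0 < c j := by
      rw [Finset.mem_Icc] at hj
      have hjK : j ≤ K := hj.2.trans hkK
      have hj1K : j - 1 ≤ K := (Nat.sub_le j 1).trans hjK
      have h1 := hSpos j hjK
      have h2 := hSpos (j - 1) hj1K
      have hSk := hSpos k hkK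
      have h4 : 0 < 1 / S j - 1 / S (j - 1) := by
        rw [sub_pos]
        exact one_div_lt_one_div_of_lt h1.1 hSj
      rw [hc]
      exact mul_pos (pow_pos hSk.1 2) h4
    have hstrict : (G j)⁻¹ < ∫ ω, (Gc j ω)⁻¹ ∂μ := by
      have h := hjensen j
      have : 0 < variance (Gc j) μ / (G j) ^ 2 := div_pos hvar (pow_pos (hGjpos j) 2)
      linarith
    exact mul_lt_mul_of_pos_left hstrict hcpos
end

section
/- Let S(·,w): {0,...,K} → (0,1] be nonincreasing with S(0,w)=1 for each w in the support of a random variable W, let S(j) := E[S(j,W)], and let G: {1,...,K} → (0,1] be nonincreasing (so that 1/G(j+1) − 1/G(j) ≥ 0). Fix k ≤ K with S(k) < 1. Then E[∑_{j=1}^k S(k,W)^2 {1/S(j,W) − 1/S(j-1,W)} / G(j)] ≤ ∑_{j=1}^k S(k)^2 {1/S(j) − 1/S(j-1)} / G(j). -/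
/-!
With `c_j = 1/G(j)`, both sides have the form `∑_{j=1}^k c_j (x_j - x_{j-1})`: on the left
`x_j = E[S(k,W)² / S(j,W)]`, on the right `x_j = S(k)² / S(j)`. The tangent-line bound
`a²/b ≥ 2ta - t²b`, i.e. Jensen for the convex map `(a,b) ↦ a²/b`, makes the left `x_j` the larger
one, with equality at `j = k` where both equal `S(k)`. Summation by parts against the nonnegative,
nondecreasing weights `c_j` turns these termwise comparisons into the inequality of the sums.
-/

open MeasureTheory Finset

theorem sum_Icc_mul_sub_le (c d : ℕ → ℝ) {n : ℕ} (hn : 1 ≤ n)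
    (hc : ∀ j ∈ Ico 1 n, c j ≤ c (j + 1)) (hd : ∀ j ∈ Ico 1 n, 0 ≤ d j) :
    ∑ j ∈ Icc 1 n, c j * (d j - d (j - 1)) ≤ c n * d n - c 1 * d 0 := by
  induction n, hn using Nat.le_induction with
  | base => simp [mul_sub]
  | succ n hn ih =>
    have hn_mem : n ∈ Ico 1 (n + 1) := mem_Ico.2 ⟨hn, n.lt_succ_self⟩
    have hIco : Ico 1 n ⊆ Ico 1 (n + 1) := Ico_subset_Ico_right n.le_succ
    have ih' := ih (fun j hj => hc j (hIco hj)) (fun j hj => hd j (hIco hj))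
    have hcn := hc n hn_mem
    have hdn := hd n hn_mem
    rw [sum_Icc_succ_top (by omega), Nat.add_sub_cancel]
    nlinarith

theorem sum_Icc_mul_sub_le_of_le (c x y : ℕ → ℝ) {n : ℕ} (hn : 1 ≤ n) (hc₁ : 0 ≤ c 1)
    (hc : ∀ j ∈ Ico 1 n, c j ≤ c (j + 1)) (hyx : ∀ j < n, y j ≤ x j) (hxy : x n = y n) :
    ∑ j ∈ Icc 1 n, c j * (x j - x (j - 1)) ≤ ∑ j ∈ Icc 1 n, c j * (y j - y (j - 1)) := by
  have h := sum_Icc_mul_sub_le c (x - y) hn hc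
    (fun j hj => sub_nonneg.2 (hyx j (mem_Ico.1 hj).2))
  have hd₀ : 0 ≤ x 0 - y 0 := sub_nonneg.2 (hyx 0 hn)
  simp only [Pi.sub_apply, hxy, sub_self, mul_zero, zero_sub] at h
  rw [← sub_nonpos, ← sum_sub_distrib]
  calc ∑ j ∈ Icc 1 n, (c j * (x j - x (j - 1)) - c j * (y j - y (j - 1)))
      = ∑ j ∈ Icc 1 n, c j * (x j - y j - (x (j - 1) - y (j - 1))) :=
        sum_congr rfl fun _ _ => by ring
    _ ≤ -(c 1 * (x 0 - y 0)) := h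
    _ ≤ 0 := neg_nonpos.2 (mul_nonneg hc₁ hd₀)

theorem sq_integral_div_integral_le {α : Type*} [MeasurableSpace α] {μ : Measure α}
    {f g : α → ℝ} (hf : Integrable f μ) (hg : Integrable g μ)
    (hfg : Integrable (fun x => f x ^ 2 / g x) μ) (hg_pos : ∀ᵐ x ∂μ, 0 < g x) :
    (∫ x, f x ∂μ) ^ 2 / ∫ x, g x ∂μ ≤ ∫ x, f x ^ 2 / g x ∂μ := by
  set t := (∫ x, f x ∂μ) / ∫ x, g x ∂μ
  have tangent : ∀ a b : ℝ, 0 < b → 2 * t * a - t ^ 2 * b ≤ a ^ 2 / b := fun a b hb => by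
    rw [le_div_iff₀ hb]
    nlinarith [sq_nonneg (a - t * b)]
  calc (∫ x, f x ∂μ) ^ 2 / ∫ x, g x ∂μ
      = 2 * t * ∫ x, f x ∂μ - t ^ 2 * ∫ x, g x ∂μ := by
        rcases eq_or_ne (∫ x, g x ∂μ) 0 with h | h
        · simp [t, h]
        · simp only [t]; field_simp; ring
    _ = ∫ x, (2 * t * f x - t ^ 2 * g x) ∂μ := by
        rw [integral_sub (hf.const_mul _) (hg.const_mul _), integral_const_mul,
          integral_const_mul]
    _ ≤ ∫ x, f x ^ 2 / g x ∂μ :=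
        integral_mono_ae ((hf.const_mul _).sub (hg.const_mul _)) hfg
          (hg_pos.mono fun x hx => tangent _ _ hx)

theorem integral_sum_Icc_mul_sub {α : Type*} [MeasurableSpace α] {μ : Measure α}
    (c : ℕ → ℝ) (φ : ℕ → α → ℝ) {n : ℕ} (hφ : ∀ j ≤ n, Integrable (φ j) μ) :
    ∫ x, ∑ j ∈ Icc 1 n, c j * (φ j x - φ (j - 1) x) ∂μ
      = ∑ j ∈ Icc 1 n, c j * ((∫ x, φ j x ∂μ) - ∫ x, φ (j - 1) x ∂μ) := by
  have hφ' : ∀ j ∈ Icc 1 n, Integrable (φ j) μ ∧ Integrable (φ (j - 1)) μ :=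
    fun j hj => ⟨hφ j (mem_Icc.1 hj).2, hφ (j - 1) (by have := (mem_Icc.1 hj).2; omega)⟩
  rw [integral_finsetSum (f := fun j x => c j * (φ j x - φ (j - 1) x)) _
    fun j hj => ((hφ' j hj).1.sub (hφ' j hj).2).const_mul _]
  exact sum_congr rfl fun j hj => by
    rw [integral_const_mul, integral_sub (hφ' j hj).1 (hφ' j hj).2]

theorem integrable_sq_div_of_le {α : Type*} [MeasurableSpace α] {μ : Measure α}
    [IsFiniteMeasure μ] {f g : α → ℝ} (hf : Measurable f) (hg : Measurable g)
    (hf_mem : ∀ x, 0 < f x ∧ f x ≤ 1) (hfg : ∀ x, f x ≤ g x) :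
    Integrable (fun x => f x ^ 2 / g x) μ :=
  .of_bound ((hf.pow_const 2).div hg).aestronglyMeasurable 1 (ae_of_all _ fun x => by
    obtain ⟨hf₀, hf₁⟩ := hf_mem x
    have hg₀ : 0 < g x := hf₀.trans_le (hfg x)
    rw [Real.norm_eq_abs, abs_of_nonneg (by positivity), div_le_one hg₀]
    nlinarith [hfg x])

theorem adjusted_le_unadjusted_when_C_indep_W_general {Ω : Type*} [MeasurableSpace Ω]
    (μ : Measure Ω) [IsProbabilityMeasure μ] (K k : ℕ) (hkK : k ≤ K)
    (Sc : ℕ → Ω → ℝ) (hScmeas : ∀ j, Measurable (Sc j))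
    (hScpos : ∀ j ≤ K, ∀ ω, 0 < Sc j ω ∧ Sc j ω ≤ 1)
    (hScanti : ∀ j, 1 ≤ j → j ≤ K → ∀ ω, Sc j ω ≤ Sc (j - 1) ω)
    (G : ℕ → ℝ) (hGpos : ∀ j ≤ K, 0 < G j ∧ G j ≤ 1)
    (hGanti : ∀ j, 1 ≤ j → j + 1 ≤ K → G (j + 1) ≤ G j)
    (S : ℕ → ℝ) (hS : ∀ j, S j = ∫ ω, Sc j ω ∂μ) :
    ∫ ω, ∑ j ∈ Finset.Icc 1 k, Sc k ω ^ 2 * (1 / Sc j ω - 1 / Sc (j - 1) ω) / G j ∂μ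
      ≤ ∑ j ∈ Finset.Icc 1 k, S k ^ 2 * (1 / S j - 1 / S (j - 1)) / G j := by
  obtain rfl | hk : k = 0 ∨ 1 ≤ k := by omega
  · simp
  have hSc_anti (ω : Ω) : AntitoneOn (Sc · ω) (Set.Iic K) :=
    antitoneOn_of_le_sub_one Set.ordConnected_Iic fun j hj hjK _ =>
      hScanti j (Nat.one_le_iff_ne_zero.2 (by simpa using hj)) hjK ω
  have hSc_int (j : ℕ) (hj : j ≤ K) : Integrable (Sc j) μ :=
    .of_bound (hScmeas j).aestronglyMeasurable 1 (ae_of_all _ fun ω => by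
      rw [Real.norm_eq_abs, abs_le]; constructor <;> linarith [hScpos j hj ω])
  have hφ_int (j : ℕ) (hj : j ≤ k) : Integrable (fun ω => Sc k ω ^ 2 / Sc j ω) μ :=
    integrable_sq_div_of_le (hScmeas k) (hScmeas j) (hScpos k hkK)
      (fun ω => hSc_anti ω (hj.trans hkK) hkK hj)
  calc ∫ ω, ∑ j ∈ Icc 1 k, Sc k ω ^ 2 * (1 / Sc j ω - 1 / Sc (j - 1) ω) / G j ∂μ
      = ∫ ω, ∑ j ∈ Icc 1 k, 1 / G j * (Sc k ω ^ 2 / Sc j ω - Sc k ω ^ 2 / Sc (j - 1) ω) ∂μ := by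
        congr 1; ext ω; exact sum_congr rfl fun _ _ => by ring
    _ = ∑ j ∈ Icc 1 k, 1 / G j * ((∫ ω, Sc k ω ^ 2 / Sc j ω ∂μ)
          - ∫ ω, Sc k ω ^ 2 / Sc (j - 1) ω ∂μ) :=
        integral_sum_Icc_mul_sub _ (fun j ω => Sc k ω ^ 2 / Sc j ω) hφ_int
    _ ≤ ∑ j ∈ Icc 1 k, 1 / G j * (S k ^ 2 / S j - S k ^ 2 / S (j - 1)) := by
        refine sum_Icc_mul_sub_le_of_le _ _ _ hk (by simp [(hGpos 1 (hk.trans hkK)).1.le])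
          (fun j hj => ?_) (fun j hj => ?_) ?_
        · obtain ⟨hj₁, hjk⟩ := mem_Ico.1 hj
          exact one_div_le_one_div_of_le (hGpos (j + 1) (by omega)).1 (hGanti j hj₁ (by omega))
        · rw [hS, hS]
          exact sq_integral_div_integral_le (hSc_int k hkK) (hSc_int j (by omega))
            (hφ_int j hj.le) (ae_of_all _ fun ω => (hScpos j (by omega) ω).1)
        · simp only [pow_two, mul_self_div_self, hS]
    _ = ∑ j ∈ Icc 1 k, S k ^ 2 * (1 / S j - 1 / S (j - 1)) / G j :=
        sum_congr rfl fun _ _ => by ring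

/-- When the censoring distribution G does not depend on covariates, the adjusted
asymptotic variance E[∑_{j=1}^k S(k,W)² {1/S(j,W) - 1/S(j-1,W)} / G(j)] is at most
the unadjusted variance ∑_{j=1}^k S(k)² {1/S(j) - 1/S(j-1)} / G(j),
where S(j) := E[S(j,W)]. -/
theorem adjusted_le_unadjusted_when_C_indep_W {Ω : Type*} [MeasurableSpace Ω]
    (μ : Measure Ω) [IsProbabilityMeasure μ] (K k : ℕ) (hkK : k ≤ K)
    (Sc : ℕ → Ω → ℝ) (hScmeas : ∀ j, Measurable (Sc j))
    (hSc0 : ∀ ω, Sc 0 ω = 1)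
    (hScpos : ∀ j ≤ K, ∀ ω, 0 < Sc j ω ∧ Sc j ω ≤ 1)
    (hScanti : ∀ j, 1 ≤ j → j ≤ K → ∀ ω, Sc j ω ≤ Sc (j - 1) ω)
    (G : ℕ → ℝ) (hGpos : ∀ j ≤ K, 0 < G j ∧ G j ≤ 1)
    (hGanti : ∀ j, 1 ≤ j → j + 1 ≤ K → G (j + 1) ≤ G j)
    (S : ℕ → ℝ) (hS : ∀ j, S j = ∫ ω, Sc j ω ∂μ)
    (hSk : S k < 1) :
    ∫ ω, ∑ j ∈ Finset.Icc 1 k, Sc k ω ^ 2 * (1 / Sc j ω - 1 / Sc (j - 1) ω) / G j ∂μ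
      ≤ ∑ j ∈ Finset.Icc 1 k, S k ^ 2 * (1 / S j - 1 / S (j - 1)) / G j :=
  adjusted_le_unadjusted_when_C_indep_W_general μ K k hkK Sc hScmeas hScpos hScanti G hGpos hGanti S
    hS
end
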